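/- arXiv:cs/0407045 — 3 statements merged into one kernel-verified Lean document; each statement's English description precedes it below -/
import Mathlib

section
/- Let b₁,…,bₙ be pairwise disjoint sets (possibly infinite), k₁,…,kₙ, l₁,…,lₙ natural numbers, and p₁,…,pₙ, q₁,…,qₙ booleans. There exists a set y such that for each i: (bᵢ ∩ y is finite ↔ pᵢ), (bᵢ \ y is finite ↔ qᵢ), and if pᵢ then |bᵢ ∩ y| = kᵢ, and if qᵢ then |bᵢ \ y| = lᵢ, if and only if for each i: (bᵢ is finite ↔ pᵢ ∧ qᵢ) and (pᵢ ∧ qᵢ → |bᵢ| = kᵢ + lᵢ). -/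
/-!
The sets `bᵢ` can be treated one at a time: if `yᵢ` works for `bᵢ`, then `⋃ⱼ bⱼ ∩ yⱼ` works for
all of them, because disjointness gives `bᵢ ∩ ⋃ⱼ (bⱼ ∩ yⱼ) = bᵢ ∩ yᵢ`. For a single set `s`,
necessity comes from the decomposition `s = (s ∩ y) ∪ (s \ y)`. For sufficiency, `y` is a subset
of size `k` when `s` is finite or when only `s ∩ y` should be finite (the case where only `s \ y`
should be finite is its complement), and half of an infinite `s` when neither part is finite.
-/

open Set Function

theorem Set.Infinite.exists_subset_infinite_sdiff_infinite {α : Type*} {s : Set α}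
    (hs : s.Infinite) : ∃ t ⊆ s, t.Infinite ∧ (s \ t).Infinite := by
  let f : ℕ ↪ α := (Infinite.natEmbedding s hs).trans (Embedding.subtype _)
  have hfs : ∀ n, f n ∈ s := fun n => (Infinite.natEmbedding s hs n).2
  have hinj : ∀ c : ℕ, Injective fun n => f (2 * n + c) := fun c a b h => by
    have := f.injective h
    omega
  refine ⟨range fun n => f (2 * n), range_subset_iff.2 fun n => hfs _,
    infinite_range_of_injective (hinj 0), (infinite_range_of_injective (hinj 1)).mono ?_⟩
  rintro _ ⟨m, rfl⟩
  refine ⟨hfs _, ?_⟩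
  rintro ⟨n, hn⟩
  have := f.injective hn
  omega

theorem Pairwise.inter_iUnion_inter {α ι : Type*} {s : ι → Set α} (hd : Pairwise (Disjoint on s))
    (t : ι → Set α) (i : ι) : s i ∩ ⋃ j, s j ∩ t j = s i ∩ t i := by
  ext x
  simp only [mem_inter_iff, mem_iUnion]
  refine ⟨?_, fun ⟨hi, ht⟩ => ⟨hi, i, hi, ht⟩⟩
  rintro ⟨hi, j, hj, ht⟩
  obtain rfl := hd.eq (not_disjoint_iff.2 ⟨x, hj, hi⟩)
  exact ⟨hi, ht⟩

section SplitType

variable {α : Type*} {s y y' : Set α} {k l : ℕ} {p q : Prop}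

def HasSplitType (s y : Set α) (k l : ℕ) (p q : Prop) : Prop :=
  ((s ∩ y).Finite ↔ p) ∧ ((s \ y).Finite ↔ q) ∧
    (p → (s ∩ y).ncard = k) ∧ (q → (s \ y).ncard = l)

theorem hasSplitType_congr (h : s ∩ y = s ∩ y') :
    HasSplitType s y k l p q ↔ HasSplitType s y' k l p q := by
  have h' : s \ y = s \ y' := by rw [← sdiff_self_inter, h, sdiff_self_inter]
  simp only [HasSplitType, h, h']

theorem hasSplitType_compl : HasSplitType s yᶜ k l p q ↔ HasSplitType s y l k q p := by
  simp only [HasSplitType, ← sdiff_eq, sdiff_compl]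
  tauto

theorem HasSplitType.finite_iff (h : HasSplitType s y k l p q) : s.Finite ↔ p ∧ q := by
  rw [← inter_union_sdiff s y, finite_union, h.1, h.2.1]

theorem HasSplitType.ncard_eq (h : HasSplitType s y k l p q) (hp : p) (hq : q) :
    s.ncard = k + l := by
  rw [← ncard_inter_add_ncard_sdiff_eq_ncard s y (h.finite_iff.2 ⟨hp, hq⟩), h.2.2.1 hp,
    h.2.2.2 hq]

theorem Set.Finite.exists_hasSplitType (hs : s.Finite) (hp : p) (hq : q)
    (hcard : s.ncard = k + l) : ∃ y, HasSplitType s y k l p q := by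
  obtain ⟨t, hts, htk⟩ := exists_subset_card_eq (show k ≤ s.ncard by omega)
  rw [← inter_eq_self_of_subset_right hts] at htk
  have hl : (s \ t).ncard = l := by
    have := ncard_inter_add_ncard_sdiff_eq_ncard s t hs
    omega
  exact ⟨t, iff_of_true (hs.subset inter_subset_left) hp, iff_of_true hs.sdiff hq,
    fun _ => htk, fun _ => hl⟩

theorem Set.Infinite.exists_hasSplitType_finite_infinite (hs : s.Infinite) (hp : p) (hq : ¬q) :
    ∃ y, HasSplitType s y k l p q := by
  obtain ⟨t, hts, htf, htk⟩ := hs.exists_subset_ncard_eq k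
  have hinf := hs.sdiff htf
  rw [← inter_eq_self_of_subset_right hts] at htf htk
  exact ⟨t, iff_of_true htf hp, iff_of_false hinf hq, fun _ => htk, hq.elim⟩

theorem Set.Infinite.exists_hasSplitType_infinite_infinite (hs : s.Infinite) (hp : ¬p) (hq : ¬q) :
    ∃ y, HasSplitType s y k l p q := by
  obtain ⟨t, hts, ht, hst⟩ := hs.exists_subset_infinite_sdiff_infinite
  rw [← inter_eq_self_of_subset_right hts] at ht
  exact ⟨t, iff_of_false ht hp, iff_of_false hst hq, hp.elim, hq.elim⟩

theorem exists_hasSplitType_iff :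
    (∃ y, HasSplitType s y k l p q) ↔ (s.Finite ↔ p ∧ q) ∧ (p ∧ q → s.ncard = k + l) := by
  refine ⟨fun ⟨y, hy⟩ => ⟨hy.finite_iff, fun ⟨hp, hq⟩ => hy.ncard_eq hp hq⟩,
    fun ⟨hfin, hcard⟩ => ?_⟩
  rcases s.finite_or_infinite with hs | hs
  · obtain ⟨hp, hq⟩ := hfin.1 hs
    exact hs.exists_hasSplitType hp hq (hcard ⟨hp, hq⟩)
  by_cases hp : p <;> by_cases hq : q
  · exact absurd (hfin.2 ⟨hp, hq⟩) hs
  · exact hs.exists_hasSplitType_finite_infinite hp hq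
  · obtain ⟨y, hy⟩ := hs.exists_hasSplitType_finite_infinite hq hp (k := l) (l := k)
    exact ⟨yᶜ, hasSplitType_compl.2 hy⟩
  · exact hs.exists_hasSplitType_infinite_infinite hp hq

theorem exists_forall_hasSplitType_iff {ι : Type*} {s : ι → Set α}
    (hd : Pairwise (Disjoint on s)) {k l : ι → ℕ} {p q : ι → Prop} :
    (∃ y, ∀ i, HasSplitType (s i) y (k i) (l i) (p i) (q i)) ↔
      ∀ i, ∃ y, HasSplitType (s i) y (k i) (l i) (p i) (q i) := by
  refine ⟨fun ⟨y, hy⟩ i => ⟨y, hy i⟩, fun h => ?_⟩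
  choose t ht using h
  exact ⟨⋃ j, s j ∩ t j, fun i => (hasSplitType_congr (hd.inter_iUnion_inter t i)).2 (ht i)⟩

end SplitType

theorem stmt_4 {α : Type*} (n : ℕ) (b : Fin n → Set α)
    (hd : Pairwise (Function.onFun Disjoint b)) (k l : Fin n → ℕ) (p q : Fin n → Prop) :
    (∃ y : Set α, ∀ i,
        ((b i ∩ y).Finite ↔ p i) ∧ ((b i \ y).Finite ↔ q i) ∧
        (p i → (b i ∩ y).ncard = k i) ∧ (q i → (b i \ y).ncard = l i)) ↔
      ∀ i, ((b i).Finite ↔ (p i ∧ q i)) ∧ (p i ∧ q i → (b i).ncard = k i + l i) :=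
  (exists_forall_hasSplitType_iff hd).trans (forall_congr' fun _ => exists_hasSplitType_iff)
end

section
/- Let F : (Fin q → ℕ) → Prop be a predicate such that the truth of F depends only on whether each argument is zero or nonzero (i.e., F w ↔ F (fun i => min (w i) 1)). Then for all w, F w ↔ F (fun i => min (w i) 1). More generally, the induction step: if G_r satisfies 'G_r w ↔ G_r (fun i => min (w i) 2^(r-1))' for all w : Fin q → ℕ, and G_{r+1} (w' : Fin (q/2) → ℕ) is defined as ∃ w : Fin q → ℕ, (∀ i, w' i = w (2i) + w (2i+1)) ∧ G_r w, then G_{r+1} w' ↔ G_{r+1} (fun i => min (w' i) 2^r) for all w'. -/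
/-!
Truncating each pair sum at `2M` can be realised by truncating its two summands at `M` in a
compatible way: if `a + b = s` and `min s (2M) = min t (2M)`, there are `a' + b' = t` with
`min a' M = min a M` and `min b' M = min b M`. Indeed, either `t = s`, or both `s, t ≥ 2M`;
then keep a summand that is below `M` and put the rest of `t` on the other one (if neither
summand is below `M`, both stay at least `M`). Applied pairwise, every decomposition of `w'` is
turned into one of `min w' (2M)` with the same truncation at `M`, and conversely, so the
existential predicate only sees `min w' (2M)`.
-/

theorem Nat.exists_add_eq_and_min_eq_min {M s t a b : ℕ} (hst : min s (2 * M) = min t (2 * M))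
    (hab : a + b = s) : ∃ a' b', a' + b' = t ∧ min a' M = min a M ∧ min b' M = min b M :=
  ⟨if a < M then a else t - min b M, t - if a < M then a else t - min b M, by split_ifs <;> omega⟩

namespace Fin

theorem forall_fin_two_mul_iff {n : ℕ} {P : Fin (2 * n) → Prop} :
    (∀ k, P k) ↔ ∀ i : Fin n, P ⟨2 * i, by omega⟩ ∧ P ⟨2 * i + 1, by omega⟩ := by
  refine ⟨fun h i => ⟨h _, h _⟩, fun h k => ?_⟩
  obtain ⟨heven, hodd⟩ := h ⟨k / 2, by omega⟩
  rcases Nat.mod_two_eq_zero_or_one k with hk | hk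
  · convert heven; dsimp only; omega
  · convert hodd; dsimp only; omega

def interleave {α : Type*} {n : ℕ} (a b : Fin n → α) (k : Fin (2 * n)) : α :=
  if k.val % 2 = 0 then a ⟨k / 2, by omega⟩ else b ⟨k / 2, by omega⟩

@[simp]
theorem interleave_two_mul {α : Type*} {n : ℕ} (a b : Fin n → α) (i : Fin n) :
    interleave a b ⟨2 * i, by omega⟩ = a i := by
  simp [interleave]

@[simp]
theorem interleave_two_mul_add_one {α : Type*} {n : ℕ} (a b : Fin n → α) (i : Fin n) :
    interleave a b ⟨2 * i + 1, by omega⟩ = b i := by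
  simp only [interleave, Nat.mul_add_mod_self_left, Nat.one_mod, one_ne_zero, if_false]
  congr 2
  omega

end Fin

section PairSum

variable {n M : ℕ}

def pairSum (w : Fin (2 * n) → ℕ) (i : Fin n) : ℕ :=
  w ⟨2 * i, by omega⟩ + w ⟨2 * i + 1, by omega⟩

theorem exists_pairSum_eq_and_min_eq {w : Fin (2 * n) → ℕ} {v : Fin n → ℕ}
    (h : ∀ i, min (pairSum w i) (2 * M) = min (v i) (2 * M)) :
    ∃ w' : Fin (2 * n) → ℕ, (∀ i, v i = pairSum w' i) ∧ ∀ k, min (w' k) M = min (w k) M := by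
  choose a b hsum ha hb using fun i => Nat.exists_add_eq_and_min_eq_min (h i) rfl
  refine ⟨Fin.interleave a b, fun i => ?_, Fin.forall_fin_two_mul_iff.2 fun i => ?_⟩
  · simp [pairSum, hsum]
  · simp [ha, hb]

theorem exists_pairSum_of_min_eq {G : (Fin (2 * n) → ℕ) → Prop}
    (hG : ∀ w, G w ↔ G fun k => min (w k) M) {v v' : Fin n → ℕ}
    (hvv' : ∀ i, min (v i) (2 * M) = min (v' i) (2 * M)) :
    (∃ w, (∀ i, v i = pairSum w i) ∧ G w) → ∃ w, (∀ i, v' i = pairSum w i) ∧ G w := by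
  rintro ⟨w, hv, hGw⟩
  obtain ⟨w', hv', hw'⟩ := exists_pairSum_eq_and_min_eq (M := M) fun i => hv i ▸ hvv' i
  refine ⟨w', hv', ?_⟩
  rwa [hG, funext hw', ← hG]

end PairSum

theorem stmt_13 (q' r : ℕ) (hr : 1 ≤ r)
    (G : (Fin (2 * q') → ℕ) → Prop)
    (hG : ∀ w, G w ↔ G (fun i => min (w i) (2 ^ (r - 1))))
    (G' : (Fin q' → ℕ) → Prop)
    (hG' : ∀ w', G' w' ↔ ∃ w : Fin (2 * q') → ℕ,
        (∀ i : Fin q', w' i = w ⟨2 * i.val, by omega⟩ + w ⟨2 * i.val + 1, by omega⟩) ∧ G w) :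
    ∀ w', G' w' ↔ G' (fun i => min (w' i) (2 ^ r)) := by
  intro w'
  have hpow : 2 ^ r = 2 * 2 ^ (r - 1) := by rw [← pow_succ']; congr; omega
  have htrunc : ∀ i, min (w' i) (2 * 2 ^ (r - 1)) = min (min (w' i) (2 * 2 ^ (r - 1))) _ :=
    fun i => (min_eq_left (min_le_right _ _)).symm
  rw [hG', hG', hpow]
  exact ⟨exists_pairSum_of_min_eq hG htrunc, exists_pairSum_of_min_eq hG fun i => (htrunc i).symm⟩
end

section
/- Multiplication is definable from successor and sets in MSOL-style encoding: given natural numbers x, y > 0, the set C = {x, 2x, …, yx} is the unique finite set S of positive naturals such that x ∈ S, S is closed under z ↦ z + x within its elements below its maximum (for every z ∈ S with z ≠ max S, z + x ∈ S), every element of S is ≥ x, min S = x, consecutive elements differ by x, and |S| = y; and then max S = x * y. -/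
theorem stmt_18 (x y : ℕ) (hx : 0 < x) (hy : 0 < y)
    (C : Finset ℕ) (hC : C = Finset.image (fun i => (i + 1) * x) (Finset.range y))
    (hCne : C.Nonempty) :
    C.card = y ∧ C.min' hCne = x ∧ C.max' hCne = x * y ∧
    (∀ z ∈ C, z ≠ C.max' hCne → z + x ∈ C) ∧
    (∀ (S : Finset ℕ) (hxS : x ∈ S), (∀ z ∈ S, x ≤ z) → S.card = y →
      (∀ z ∈ S, z ≠ S.max' ⟨x, hxS⟩ → z + x ∈ S) → S = C) := by
  have hinj : Function.Injective (fun i : ℕ => (i + 1) * x) := by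
    intro a b h
    simp only at h
    have := Nat.eq_of_mul_eq_mul_right hx h
    omega
  have hxC : x ∈ C := by
    rw [hC]
    exact Finset.mem_image.mpr ⟨0, Finset.mem_range.mpr hy, by ring⟩
  have hxyC : x * y ∈ C := by
    rw [hC]
    refine Finset.mem_image.mpr ⟨y - 1, Finset.mem_range.mpr (by omega), ?_⟩
    have : y - 1 + 1 = y := by omega
    rw [this, mul_comm]
  have hgeC : ∀ z ∈ C, x ≤ z := by
    intro z hz
    rw [hC] at hz
    obtain ⟨i, _, rfl⟩ := Finset.mem_image.mp hz
    nlinarith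
  have hleC : ∀ z ∈ C, z ≤ x * y := by
    intro z hz
    rw [hC] at hz
    obtain ⟨i, hi, rfl⟩ := Finset.mem_image.mp hz
    simp only [Finset.mem_range] at hi
    calc (i + 1) * x ≤ y * x := Nat.mul_le_mul_right x (by omega)
    _ = x * y := mul_comm _ _
  have hcard : C.card = y := by
    rw [hC, Finset.card_image_of_injective _ hinj, Finset.card_range]
  have hmin : C.min' hCne = x :=
    le_antisymm (Finset.min'_le _ _ hxC) (Finset.le_min' _ _ _ hgeC)
  have hmax : C.max' hCne = x * y :=
    le_antisymm (Finset.max'_le _ _ _ hleC) (Finset.le_max' _ _ hxyC)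
  have hclose : ∀ z ∈ C, z ≠ C.max' hCne → z + x ∈ C := by
    intro z hz hne
    rw [hmax] at hne
    rw [hC] at hz ⊢
    obtain ⟨i, hi, rfl⟩ := Finset.mem_image.mp hz
    simp only [Finset.mem_range] at hi
    have hiy : i + 1 < y := by
      rcases Nat.lt_or_ge (i + 1) y with h | h
      · exact h
      · exfalso; apply hne; have : i + 1 = y := by omega
        rw [this, mul_comm]
    exact Finset.mem_image.mpr ⟨i + 1, Finset.mem_range.mpr hiy, by ring⟩
  refine ⟨hcard, hmin, hmax, hclose, ?_⟩
  intro S hxS hge hScard hSclose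
  set M := S.max' ⟨x, hxS⟩ with hMdef
  -- every element reaches M by adding multiples of x
  have key : ∀ n z, z ∈ S → M - z ≤ n → ∃ m, z + m * x = M := by
    intro n
    induction n with
    | zero =>
      intro z hz h0
      have := Finset.le_max' S z hz
      exact ⟨0, by omega⟩
    | succ n ih =>
      intro z hz h
      by_cases hmaxz : z = M
      · exact ⟨0, by omega⟩
      · have hz' := hSclose z hz hmaxz
        have hle : z + x ≤ M := Finset.le_max' _ _ hz'
        have hlt : z < M := lt_of_le_of_ne (Finset.le_max' _ _ hz) hmaxz
        obtain ⟨m, hm⟩ := ih (z + x) hz' (by omega)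
        exact ⟨m + 1, by rw [← hm]; ring⟩
  obtain ⟨m0, hm0⟩ := key (M - x) x hxS le_rfl
  have hMval : M = (m0 + 1) * x := by rw [← hm0]; ring
  -- S equals the image over range (m0+1)
  have hSeq : S = Finset.image (fun i => (i + 1) * x) (Finset.range (m0 + 1)) := by
    apply Finset.Subset.antisymm
    · intro z hz
      obtain ⟨m, hm⟩ := key (M - z) z hz le_rfl
      have hzx : x ≤ z := hge z hz
      have hmle : m ≤ m0 := by
        have h1 : x + m * x ≤ z + m * x := by omega
        rw [hm, hMval] at h1
        have h2 : m * x ≤ m0 * x := by nlinarith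
        exact Nat.le_of_mul_le_mul_right h2 hx
      refine Finset.mem_image.mpr ⟨m0 - m, Finset.mem_range.mpr (by omega), ?_⟩
      have h3 : (m0 - m + 1) * x + m * x = z + m * x := by
        rw [← add_mul, show m0 - m + 1 + m = m0 + 1 from by omega, ← hMval, hm]
      omega
    · intro z hz
      obtain ⟨j, hj, rfl⟩ := Finset.mem_image.mp hz
      simp only [Finset.mem_range] at hj
      clear hz
      induction j with
      | zero => simpa using hxS
      | succ j ihj =>
        have hjS : (j + 1) * x ∈ S := ihj (by omega)
        have hne : (j + 1) * x ≠ M := by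
          rw [hMval]
          have : (j + 1) * x < (m0 + 1) * x := by
            exact (Nat.mul_lt_mul_right hx).mpr (by omega)
          omega
        have := hSclose _ hjS hne
        have heq : (j + 1) * x + x = (j + 1 + 1) * x := by ring
        rwa [heq] at this
  have hm0y : m0 + 1 = y := by
    rw [hSeq, Finset.card_image_of_injective _ hinj, Finset.card_range] at hScard
    exact hScard
  rw [hSeq, hm0y, hC]
end
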